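/- For all indices 1 ≤ i, j ≤ ℓ and every integer m, the quantum affine Cartan–lowering relation holds mode-wise: z·K_i(z)∘F_j^{(m)} − q_i^{−a_{ij}}·K_i(z)∘F_j^{(m+1)} = q_i^{−a_{ij}}·z·F_j^{(m)}∘K_i(z) − F_j^{(m+1)}∘K_i(z), as an identity of ℂ(s)(z)-linear endomorphisms of L (this is the coefficient of w^{−m} in the relation (z − q_i^{−a_{ij}}w)K_i^{±}(z)F_j(w) = (q_i^{−a_{ij}}z − w)F_j(w)K_i^{±}(z)). -/

import Mathlib

/-!
Both sides are sums over `k` of operators `(coefficient) ∘ u_{j,k}`, and passing from `F_j^{(n)}`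
to `F_j^{(n+1)}` multiplies the `k`-th coefficient by `w_k = q_j² V_{j,k}²`. Since `K_i(z)` acts
by multiplication, `u_{j,k} ∘ K_i = u_{j,k}(K_i) · u_{j,k}`, so the relation reduces term by
term to `(z - q_i^{-a_ij} w_k) K_i = (q_i^{-a_ij} z - w_k) u_{j,k}(K_i)`. The automorphism
`u_{j,k}` multiplies `V_{j,k}²` by `q_j²`: it rescales the monomial part of `K_i` by
`q_j^{a_ji}`, and the factors `z - q_j^{a_ji+2r} V_{j,k}²` (for `j ≠ i`) or the poles
(for `j = i`) telescope, giving
`u_{j,k}(K_i) = q_j^{a_ji} (z - q_j^{2-a_ji} V_{j,k}²) / (z - q_j^{2+a_ji} V_{j,k}²) · K_i`.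
The symmetry `d_i a_ij = d_j a_ji` turns this into the required identity.
-/

open MvPolynomial Finset

set_option synthInstance.maxHeartbeats 1000000
set_option maxHeartbeats 1000000

noncomputable section

/-- The base field `ℂ(s)`. -/
abbrev K0 := RatFunc ℂ

/-- The variables. -/
abbrev Var (ℓ : ℕ) (m l : Fin ℓ → ℕ) := Unit ⊕ (((i : Fin ℓ) × Fin (m i)) ⊕ ((i : Fin ℓ) × Fin (l i)))

/-- The rational function field over `ℂ(s)` in the given variables. -/
abbrev FF (ℓ : ℕ) (m l : Fin ℓ → ℕ) := FractionRing (MvPolynomial (Var ℓ m l) K0)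

variable (ℓ : ℕ) (m l : Fin ℓ → ℕ) (d : Fin ℓ → ℕ) (a : Fin ℓ → Fin ℓ → ℤ)

def cstHom : K0 →+* FF ℓ m l :=
  (algebraMap (MvPolynomial (Var ℓ m l) K0) (FF ℓ m l)).comp
    (C : K0 →+* MvPolynomial (Var ℓ m l) K0)

def cst (c : K0) : FF ℓ m l := cstHom ℓ m l c

/-- The variable `V_{i,k}`. -/
def V (i : Fin ℓ) (k : Fin (m i)) : FF ℓ m l :=
  algebraMap (MvPolynomial (Var ℓ m l) K0) (FF ℓ m l) (X (Sum.inr (Sum.inl ⟨i, k⟩)))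

/-- The variable `W_{i,t}`. -/
def W (i : Fin ℓ) (t : Fin (l i)) : FF ℓ m l :=
  algebraMap (MvPolynomial (Var ℓ m l) K0) (FF ℓ m l) (X (Sum.inr (Sum.inr ⟨i, t⟩)))

/-- The variable `z`. -/
def zvar : FF ℓ m l :=
  algebraMap (MvPolynomial (Var ℓ m l) K0) (FF ℓ m l) (X (Sum.inl ()))

/-- `s ∈ ℂ(s)`. -/
def sElt : K0 := RatFunc.X

/-- `q = s²`. -/
def qElt : K0 := RatFunc.X ^ 2

/-- `q^e` for an integer exponent `e`. -/
def qz (e : ℤ) : K0 := qElt ^ e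

/-- `q_i^e = q^{d_i·e}`. -/
def qiz (i : Fin ℓ) (e : ℤ) : K0 := qElt ^ ((d i : ℤ) * e)

/-- `q_i − q_i⁻¹`. -/
def qdiff (i : Fin ℓ) : K0 := qiz ℓ d i 1 - qiz ℓ d i (-1)

/-- `c_i = s^{Σ_j d_j·m_j·a_{ji}}`. -/
def cElt (i : Fin ℓ) : K0 := sElt ^ (∑ j : Fin ℓ, (d j : ℤ) * (m j : ℤ) * a j i)

/-- The algebra automorphism of the polynomial ring rescaling the variable `w` by the
nonzero constant `c` and fixing all other variables. -/
def scalePoly (c : K0) (hc : c ≠ 0) (w : Var ℓ m l) :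
    MvPolynomial (Var ℓ m l) K0 ≃ₐ[K0] MvPolynomial (Var ℓ m l) K0 :=
  AlgEquiv.ofAlgHom
    (aeval (fun j => if j = w then MvPolynomial.C c * X j else X j))
    (aeval (fun j => if j = w then MvPolynomial.C c⁻¹ * X j else X j))
    (by
      apply MvPolynomial.algHom_ext; intro j
      by_cases h : j = w <;>
        simp [h, ← mul_assoc, ← C_mul, mul_inv_cancel₀ hc, inv_mul_cancel₀ hc])
    (by
      apply MvPolynomial.algHom_ext; intro j
      by_cases h : j = w <;>
        simp [h, ← mul_assoc, ← C_mul, mul_inv_cancel₀ hc, inv_mul_cancel₀ hc])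

/-- The induced automorphism of `F`. -/
def scaleField (c : K0) (hc : c ≠ 0) (w : Var ℓ m l) : FF ℓ m l ≃+* FF ℓ m l :=
  IsFractionRing.ringEquivOfRingEquiv (scalePoly ℓ m l c hc w).toRingEquiv

/-- `u_{i,k}` : the automorphism `V_{i,k} ↦ q^{d_i}·V_{i,k}`. -/
def uik (i : Fin ℓ) (k : Fin (m i)) : FF ℓ m l ≃+* FF ℓ m l :=
  scaleField ℓ m l (qElt ^ (d i)) (pow_ne_zero _ (pow_ne_zero _ RatFunc.X_ne_zero))
    (Sum.inr (Sum.inl ⟨i, k⟩))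

/-- The field `ℂ(s)({W_{i,t}})` of rational functions in the `W`-variables only:
the coefficient field for the polynomials `R_i^{(±)}`. -/
abbrev WField := FractionRing (MvPolynomial ((i : Fin ℓ) × Fin (l i)) K0)

/-- `W_{i,t}` as an element of `ℂ(s)({W_{i,t}})`. -/
def Wsmall (i : Fin ℓ) (t : Fin (l i)) : WField ℓ l :=
  algebraMap (MvPolynomial ((i : Fin ℓ) × Fin (l i)) K0) (WField ℓ l) (X ⟨i, t⟩)

/-- The natural embedding `ℂ(s)({W_{i,t}}) ↪ F`. -/
def wEmb : WField ℓ l →+* FF ℓ m l :=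
  IsFractionRing.lift (g :=
    ((algebraMap (MvPolynomial (Var ℓ m l) K0) (FF ℓ m l)).comp
      (rename (fun w => Sum.inr (Sum.inr w))).toRingHom))
    ((IsFractionRing.injective (MvPolynomial (Var ℓ m l) K0) (FF ℓ m l)).comp
      (rename_injective _ (Sum.inr_injective.comp Sum.inr_injective)))

/-- Evaluation of a polynomial with coefficients in `ℂ(s)({W_{i,t}})` at a point of `F`. -/
def Rval (P : Polynomial (WField ℓ l)) (x : FF ℓ m l) : FF ℓ m l :=
  Polynomial.eval₂ (wEmb ℓ m l) x P

/-- Multiplication by the rational function `K_i(z)` (with `z` the extra variable). -/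
def KopZ (i : Fin ℓ) : FF ℓ m l → FF ℓ m l := fun f =>
  (cst ℓ m l (cElt ℓ m d a i) * (∏ j : Fin ℓ, ∏ p : Fin (m j), (V ℓ m l j p) ^ (a j i)) *
    (∏ t : Fin (l i), (zvar ℓ m l * (W ℓ m l i t)⁻¹ - W ℓ m l i t)) *
    (∏ j ∈ univ.erase i, ∏ r ∈ range (-(a j i)).toNat, ∏ p : Fin (m j),
      (zvar ℓ m l
        - cst ℓ m l (qz ((d j : ℤ) * (a j i + 2 * ((r : ℤ) + 1)))) * (V ℓ m l j p) ^ 2)) /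
    (∏ p : Fin (m i),
      ((zvar ℓ m l - (V ℓ m l i p) ^ 2) *
        (zvar ℓ m l - cst ℓ m l (qiz ℓ d i 2) * (V ℓ m l i p) ^ 2)))) * f

/-- The mode operator `F_i^{(n)}`. -/
def Fnop (Rm : (i : Fin ℓ) → Polynomial (WField ℓ l)) (i : Fin ℓ) (n : ℤ) :
    FF ℓ m l → FF ℓ m l := fun f =>
  cst ℓ m l (-(qiz ℓ d i (-(2 * (m i : ℤ))) / qdiff ℓ d i)) * (∏ p : Fin (m i), V ℓ m l i p) *
    (∏ j ∈ univ.filter (fun j => j < i), ∏ p : Fin (m j), (V ℓ m l j p) ^ (a j i)) *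
    ∑ k : Fin (m i),
      (cst ℓ m l (qiz ℓ d i (2 * n)) * (V ℓ m l i k) ^ (2 * n - 2)
          * Rval ℓ m l (Rm i) (cst ℓ m l (qiz ℓ d i 2) * (V ℓ m l i k) ^ 2) *
        (∏ j ∈ univ.filter (fun j => j < i), ∏ r ∈ range (-(a j i)).toNat, ∏ p : Fin (m j),
          (cst ℓ m l (qiz ℓ d i 2) * (V ℓ m l i k) ^ 2
            - cst ℓ m l (qz ((d j : ℤ) * (a j i + 2 * ((r : ℤ) + 1)))) * (V ℓ m l j p) ^ 2)) /
        (∏ p ∈ univ.erase k, ((V ℓ m l i k) ^ 2 - (V ℓ m l i p) ^ 2))) *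
      (uik ℓ m l d i k) f

theorem map_prod_eq_prod_mul_prod {α M F : Type*} [CommMonoid M] [FunLike F M M]
    [MonoidHomClass F M M] (σ : F) {s : Finset α} {g r : α → M}
    (h : ∀ x ∈ s, σ (g x) = r x * g x) :
    σ (∏ x ∈ s, g x) = (∏ x ∈ s, r x) * ∏ x ∈ s, g x := by
  rw [map_prod, ← prod_mul_distrib]
  exact prod_congr rfl h

theorem map_prod_eq_mul_prod_of_map_eq {α M F : Type*} [DecidableEq α] [CommMonoid M]
    [FunLike F M M] [MonoidHomClass F M M] (σ : F) {s : Finset α} {g : α → M} {x₀ : α}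
    (hx₀ : x₀ ∈ s) {r : M} (h₀ : σ (g x₀) = r * g x₀) (h : ∀ x ∈ s, x ≠ x₀ → σ (g x) = g x) :
    σ (∏ x ∈ s, g x) = r * ∏ x ∈ s, g x := by
  rw [map_prod_eq_prod_mul_prod σ (r := fun x => if x = x₀ then r else 1), prod_ite_eq',
    if_pos hx₀]
  intro x hx
  split_ifs with hx₀'
  · exact hx₀' ▸ h₀
  · rw [one_mul, h x hx hx₀']

theorem prod_range_succ_eq_div_mul {K : Type*} [Field K] (f : ℕ → K) (n : ℕ) (h₀ : f 0 ≠ 0) :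
    ∏ r ∈ range n, f (r + 1) = f n / f 0 * ∏ r ∈ range n, f r := by
  rw [div_mul_eq_mul_div, eq_div_iff h₀, ← prod_range_succ', prod_range_succ, mul_comm]

theorem qElt_ne_zero : qElt ≠ 0 := pow_ne_zero _ RatFunc.X_ne_zero

section Field

variable {ℓ m l}

theorem cst_mul (x y : K0) : cst ℓ m l (x * y) = cst ℓ m l x * cst ℓ m l y := map_mul _ x y

theorem cst_one : cst ℓ m l 1 = 1 := map_one _

theorem cst_zpow (x : K0) (n : ℤ) : cst ℓ m l (x ^ n) = cst ℓ m l x ^ n := map_zpow₀ _ x n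

theorem V_ne_zero (j : Fin ℓ) (p : Fin (m j)) : V ℓ m l j p ≠ 0 :=
  (map_ne_zero_iff _ (IsFractionRing.injective _ _)).2 (X_ne_zero _)

def linFactor (ℓ : ℕ) (m l : Fin ℓ → ℕ) (c : K0) (j : Fin ℓ) (p : Fin (m j)) : FF ℓ m l :=
  zvar ℓ m l - cst ℓ m l c * V ℓ m l j p ^ 2

theorem linFactor_ne_zero (c : K0) (j : Fin ℓ) (p : Fin (m j)) :
    linFactor ℓ m l c j p ≠ 0 := by
  have hpoly : linFactor ℓ m l c j p = algebraMap (MvPolynomial (Var ℓ m l) K0) (FF ℓ m l)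
      (X (Sum.inl ()) - MvPolynomial.C c * X (Sum.inr (Sum.inl ⟨j, p⟩)) ^ 2) := by
    simp [linFactor, zvar, cst, cstHom, V]
  rw [hpoly, Ne, map_eq_zero_iff _ (IsFractionRing.injective _ _)]
  intro h
  -- specialise `z` to `1` and every other variable to `0`
  simpa using congrArg (MvPolynomial.eval fun v => if v = Sum.inl () then (1 : K0) else 0) h

end Field

section Automorphism

variable {ℓ m l d} (j : Fin ℓ) (k : Fin (m j))

theorem uik_algebraMap (p : MvPolynomial (Var ℓ m l) K0) :
    uik ℓ m l d j k (algebraMap _ (FF ℓ m l) p) = algebraMap _ (FF ℓ m l)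
      (aeval (fun v => if v = Sum.inr (Sum.inl ⟨j, k⟩) then C (qElt ^ d j) * X v else X v) p) :=
  IsFractionRing.ringEquivOfRingEquiv_algebraMap _ p

theorem uik_cst (c : K0) : uik ℓ m l d j k (cst ℓ m l c) = cst ℓ m l c := by
  simp [cst, cstHom, uik_algebraMap]

theorem uik_zvar : uik ℓ m l d j k (zvar ℓ m l) = zvar ℓ m l := by
  simp [zvar, uik_algebraMap]

theorem uik_W (i : Fin ℓ) (t : Fin (l i)) : uik ℓ m l d j k (W ℓ m l i t) = W ℓ m l i t := by
  simp [W, uik_algebraMap]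

theorem uik_V_self : uik ℓ m l d j k (V ℓ m l j k) = cst ℓ m l (qz (d j)) * V ℓ m l j k := by
  simp [V, qz, cst, cstHom, uik_algebraMap]

theorem uik_V_of_ne {j' : Fin ℓ} {p : Fin (m j')} (h : (⟨j', p⟩ : Σ i, Fin (m i)) ≠ ⟨j, k⟩) :
    uik ℓ m l d j k (V ℓ m l j' p) = V ℓ m l j' p := by
  simp [V, uik_algebraMap, h]

theorem uik_linFactor_self (c : K0) :
    uik ℓ m l d j k (linFactor ℓ m l c j k) = linFactor ℓ m l (c * qiz ℓ d j 2) j k := by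
  have hq : cst ℓ m l (qz (d j)) ^ 2 = cst ℓ m l (qiz ℓ d j 2) := by
    rw [← zpow_natCast, ← cst_zpow, qz, ← zpow_mul]; rfl
  rw [linFactor, linFactor, map_sub, map_mul, map_pow, uik_zvar, uik_cst, uik_V_self, mul_pow, hq,
    cst_mul]
  ring

theorem uik_linFactor_of_ne (c : K0) {j' : Fin ℓ} {p : Fin (m j')}
    (h : (⟨j', p⟩ : Σ i, Fin (m i)) ≠ ⟨j, k⟩) :
    uik ℓ m l d j k (linFactor ℓ m l c j' p) = linFactor ℓ m l c j' p := by
  simp only [linFactor, map_sub, map_mul, map_pow, uik_zvar, uik_cst, uik_V_of_ne j k h]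

end Automorphism

def Knum (i : Fin ℓ) : FF ℓ m l :=
  ∏ j ∈ univ.erase i, ∏ r ∈ range (-(a j i)).toNat, ∏ p : Fin (m j),
    linFactor ℓ m l (qz ((d j : ℤ) * (a j i + 2 * ((r : ℤ) + 1)))) j p

def Kden (i : Fin ℓ) : FF ℓ m l :=
  ∏ p : Fin (m i), linFactor ℓ m l 1 i p * linFactor ℓ m l (qiz ℓ d i 2) i p

def Kmul (i : Fin ℓ) : FF ℓ m l :=
  cst ℓ m l (cElt ℓ m d a i) * (∏ j : Fin ℓ, ∏ p : Fin (m j), V ℓ m l j p ^ a j i) *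
    (∏ t : Fin (l i), (zvar ℓ m l * (W ℓ m l i t)⁻¹ - W ℓ m l i t)) * Knum ℓ m l d a i /
      Kden ℓ m l d i

section Kmul

variable {ℓ m l d a}

theorem KopZ_apply (i : Fin ℓ) (f : FF ℓ m l) : KopZ ℓ m l d a i f = Kmul ℓ m l d a i * f := by
  simp [KopZ, Kmul, Knum, Kden, linFactor, cst_one]

variable (i j : Fin ℓ) (k : Fin (m j))

theorem uik_prod_V_zpow :
    uik ℓ m l d j k (∏ j' : Fin ℓ, ∏ p : Fin (m j'), V ℓ m l j' p ^ a j' i) =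
      cst ℓ m l (qz (d j * a j i)) * ∏ j' : Fin ℓ, ∏ p : Fin (m j'), V ℓ m l j' p ^ a j' i := by
  classical
  simp only [← Fintype.prod_sigma' (fun j' p => V ℓ m l j' p ^ a j' i)]
  refine map_prod_eq_mul_prod_of_map_eq _ (mem_univ ⟨j, k⟩) ?_ fun x _ hx => ?_
  · rw [map_zpow₀, uik_V_self, mul_zpow, ← cst_zpow, qz, qz, zpow_mul]
  · rw [map_zpow₀, uik_V_of_ne j k hx]

theorem uik_prod_zW :
    uik ℓ m l d j k (∏ t : Fin (l i), (zvar ℓ m l * (W ℓ m l i t)⁻¹ - W ℓ m l i t)) =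
      ∏ t : Fin (l i), (zvar ℓ m l * (W ℓ m l i t)⁻¹ - W ℓ m l i t) := by
  simp only [map_prod, map_sub, map_mul, map_inv₀, uik_zvar, uik_W]

theorem uik_Knum_self (k : Fin (m i)) :
    uik ℓ m l d i k (Knum ℓ m l d a i) = Knum ℓ m l d a i := by
  simp only [Knum, map_prod]
  refine prod_congr rfl fun j' hj' => prod_congr rfl fun r _ => prod_congr rfl fun p _ => ?_
  exact uik_linFactor_of_ne i k _ fun h => ne_of_mem_erase hj' (congrArg Sigma.fst h)

theorem uik_Kden_of_ne (hji : j ≠ i) : uik ℓ m l d j k (Kden ℓ m l d i) = Kden ℓ m l d i := by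
  have hfix (c : K0) (p : Fin (m i)) :
      uik ℓ m l d j k (linFactor ℓ m l c i p) = linFactor ℓ m l c i p :=
    uik_linFactor_of_ne j k c fun h => hji (congrArg Sigma.fst h).symm
  simp only [Kden, map_prod, map_mul, hfix]

theorem uik_Kden_self (k : Fin (m i)) :
    uik ℓ m l d i k (Kden ℓ m l d i) =
      linFactor ℓ m l (qz (d i * 4)) i k / linFactor ℓ m l 1 i k * Kden ℓ m l d i := by
  classical
  refine map_prod_eq_mul_prod_of_map_eq _ (mem_univ k) ?_ fun p _ hp => ?_
  · have hq : qiz ℓ d i 2 * qiz ℓ d i 2 = qz (d i * 4) := by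
      rw [qiz, ← zpow_add₀ qElt_ne_zero, qz]; ring_nf
    rw [map_mul, uik_linFactor_self, uik_linFactor_self, one_mul, hq]
    field_simp [linFactor_ne_zero]
  · have hne : (⟨i, p⟩ : Σ i, Fin (m i)) ≠ ⟨i, k⟩ := fun h => hp (eq_of_heq (Sigma.mk.inj h).2)
    rw [map_mul, uik_linFactor_of_ne i k _ hne, uik_linFactor_of_ne i k _ hne]

theorem uik_prod_range_linFactor (c : ℕ → K0) (hc : ∀ r, c r * qiz ℓ d j 2 = c (r + 1)) (n : ℕ) :
    uik ℓ m l d j k (∏ r ∈ range n, linFactor ℓ m l (c r) j k) =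
      linFactor ℓ m l (c n) j k / linFactor ℓ m l (c 0) j k *
        ∏ r ∈ range n, linFactor ℓ m l (c r) j k := by
  simp only [map_prod, uik_linFactor_self, hc]
  exact prod_range_succ_eq_div_mul (fun r => linFactor ℓ m l (c r) j k) n (linFactor_ne_zero _ _ _)

theorem uik_Knum_of_ne (hji : j ≠ i) (hneg : a j i ≤ 0) :
    uik ℓ m l d j k (Knum ℓ m l d a i) =
      linFactor ℓ m l (qz (d j * (2 - a j i))) j k / linFactor ℓ m l (qz (d j * (a j i + 2))) j k *
        Knum ℓ m l d a i := by
  classical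
  refine map_prod_eq_mul_prod_of_map_eq _ (mem_erase.2 ⟨hji, mem_univ j⟩) ?_ fun j' _ hj' => ?_
  · rw [prod_comm]
    refine map_prod_eq_mul_prod_of_map_eq _ (mem_univ k) ?_ fun p _ hp => ?_
    · have hc (r : ℕ) : qz (d j * (a j i + 2 * ((r : ℤ) + 1))) * qiz ℓ d j 2 =
          qz (d j * (a j i + 2 * (((r + 1 : ℕ) : ℤ) + 1))) := by
        rw [qiz, qz, qz, ← zpow_add₀ qElt_ne_zero]; push_cast; ring_nf
      rw [uik_prod_range_linFactor j k _ hc, Int.toNat_of_nonneg (neg_nonneg.2 hneg)]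
      ring_nf
    · have hne : (⟨j, p⟩ : Σ i, Fin (m i)) ≠ ⟨j, k⟩ := fun h => hp (eq_of_heq (Sigma.mk.inj h).2)
      simp only [map_prod, uik_linFactor_of_ne j k _ hne]
  · have hne (p : Fin (m j')) : (⟨j', p⟩ : Σ i, Fin (m i)) ≠ ⟨j, k⟩ :=
      fun h => hj' (congrArg Sigma.fst h)
    simp only [map_prod, uik_linFactor_of_ne j k _ (hne _)]

theorem uik_Kmul (ha : a i i = 2) (hneg : j ≠ i → a j i ≤ 0) :
    uik ℓ m l d j k (Kmul ℓ m l d a i) =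
      cst ℓ m l (qz (d j * a j i)) * (linFactor ℓ m l (qz (d j * (2 - a j i))) j k /
        linFactor ℓ m l (qz (d j * (a j i + 2))) j k) * Kmul ℓ m l d a i := by
  rw [Kmul, map_div₀, map_mul, map_mul, map_mul, uik_cst, uik_prod_V_zpow, uik_prod_zW]
  by_cases hji : j = i
  · subst hji
    rw [uik_Knum_self, uik_Kden_self, ha, sub_self, mul_zero, show qz 0 = 1 from zpow_zero _,
      show (d j : ℤ) * (2 + 2) = d j * 4 by ring]
    field_simp [linFactor_ne_zero]
  · rw [uik_Knum_of_ne i j k hji (hneg hji), uik_Kden_of_ne i j k hji]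
    ring

end Kmul

theorem sub_mul_Kmul_eq_sub_mul_uik_Kmul {ℓ : ℕ} {m l d : Fin ℓ → ℕ} {a : Fin ℓ → Fin ℓ → ℤ}
    (ha : ∀ i, a i i = 2) (ha' : ∀ i j, i ≠ j → a i j ≤ 0)
    (hsym : ∀ i j, (d i : ℤ) * a i j = (d j : ℤ) * a j i) (i j : Fin ℓ) (k : Fin (m j)) :
    (zvar ℓ m l - cst ℓ m l (qiz ℓ d i (-(a i j))) * (cst ℓ m l (qiz ℓ d j 2) * V ℓ m l j k ^ 2)) *
        Kmul ℓ m l d a i =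
      (cst ℓ m l (qiz ℓ d i (-(a i j))) * zvar ℓ m l - cst ℓ m l (qiz ℓ d j 2) * V ℓ m l j k ^ 2) *
        uik ℓ m l d j k (Kmul ℓ m l d a i) := by
  have hzero : cst ℓ m l (qiz ℓ d i (-(a i j))) * cst ℓ m l (qz (d j * a j i)) = 1 := by
    rw [← cst_mul, qiz, qz, ← zpow_add₀ qElt_ne_zero,
      show (d i : ℤ) * -a i j + d j * a j i = 0 by linear_combination -hsym i j, zpow_zero, cst_one]
  have hnum : zvar ℓ m l - cst ℓ m l (qiz ℓ d i (-(a i j))) *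
      (cst ℓ m l (qiz ℓ d j 2) * V ℓ m l j k ^ 2) =
        linFactor ℓ m l (qz (d j * (2 - a j i))) j k := by
    rw [linFactor, ← mul_assoc, ← cst_mul, qiz, qiz, ← zpow_add₀ qElt_ne_zero,
      show (d i : ℤ) * -a i j + d j * 2 = d j * (2 - a j i) by linear_combination -hsym i j]
    rfl
  have hden : cst ℓ m l (qiz ℓ d i (-(a i j))) * zvar ℓ m l - cst ℓ m l (qiz ℓ d j 2) *
      V ℓ m l j k ^ 2 =
        cst ℓ m l (qiz ℓ d i (-(a i j))) * linFactor ℓ m l (qz (d j * (a j i + 2))) j k := by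
    rw [linFactor, mul_sub, ← mul_assoc, ← cst_mul, qiz, qz, ← zpow_add₀ qElt_ne_zero,
      show (d i : ℤ) * -a i j + d j * (a j i + 2) = d j * 2 by linear_combination -hsym i j]
    rfl
  rw [uik_Kmul i j k (ha i) (ha' j i), hnum, hden]
  calc _ = cst ℓ m l (qiz ℓ d i (-(a i j))) * cst ℓ m l (qz (d j * a j i)) *
        linFactor ℓ m l (qz (d j * (2 - a j i))) j k * Kmul ℓ m l d a i := by rw [hzero, one_mul]
    _ = _ := by field_simp [linFactor_ne_zero]

def Fprefactor (i : Fin ℓ) : FF ℓ m l :=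
  cst ℓ m l (-(qiz ℓ d i (-(2 * (m i : ℤ))) / qdiff ℓ d i)) * (∏ p : Fin (m i), V ℓ m l i p) *
    (∏ j ∈ univ.filter (fun j => j < i), ∏ p : Fin (m j), (V ℓ m l j p) ^ (a j i))

def Fcoeff (Rm : (i : Fin ℓ) → Polynomial (WField ℓ l)) (i : Fin ℓ) (n : ℤ) (k : Fin (m i)) :
    FF ℓ m l :=
  cst ℓ m l (qiz ℓ d i (2 * n)) * (V ℓ m l i k) ^ (2 * n - 2)
      * Rval ℓ m l (Rm i) (cst ℓ m l (qiz ℓ d i 2) * (V ℓ m l i k) ^ 2) *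
    (∏ j ∈ univ.filter (fun j => j < i), ∏ r ∈ range (-(a j i)).toNat, ∏ p : Fin (m j),
      (cst ℓ m l (qiz ℓ d i 2) * (V ℓ m l i k) ^ 2
        - cst ℓ m l (qz ((d j : ℤ) * (a j i + 2 * ((r : ℤ) + 1)))) * (V ℓ m l j p) ^ 2)) /
    (∏ p ∈ univ.erase k, ((V ℓ m l i k) ^ 2 - (V ℓ m l i p) ^ 2))

section Fnop

variable {ℓ m l d a} (Rm : (i : Fin ℓ) → Polynomial (WField ℓ l)) (i : Fin ℓ) (n : ℤ)

theorem Fnop_apply (f : FF ℓ m l) :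
    Fnop ℓ m l d a Rm i n f =
      Fprefactor ℓ m l d a i * ∑ k : Fin (m i), Fcoeff ℓ m l d a Rm i n k * uik ℓ m l d i k f :=
  rfl

theorem Fcoeff_add_one (k : Fin (m i)) :
    Fcoeff ℓ m l d a Rm i (n + 1) k =
      cst ℓ m l (qiz ℓ d i 2) * V ℓ m l i k ^ 2 * Fcoeff ℓ m l d a Rm i n k := by
  have hq : qiz ℓ d i (2 * (n + 1)) = qiz ℓ d i 2 * qiz ℓ d i (2 * n) := by
    rw [qiz, qiz, qiz, ← zpow_add₀ qElt_ne_zero]; ring_nf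
  have hV : V ℓ m l i k ^ (2 * (n + 1) - 2) = V ℓ m l i k ^ 2 * V ℓ m l i k ^ (2 * n - 2) := by
    rw [← zpow_natCast, ← zpow_add₀ (V_ne_zero i k)]; push_cast; ring_nf
  rw [Fcoeff, Fcoeff, hq, cst_mul, hV]
  ring

end Fnop

theorem qaffine_KF_general
    (ℓ : ℕ)
    (a : Fin ℓ → Fin ℓ → ℤ) (ha : ∀ i, a i i = 2) (ha' : ∀ i j, i ≠ j → a i j ≤ 0)
    (d : Fin ℓ → ℕ)
    (hsym : ∀ i j, (d i : ℤ) * a i j = (d j : ℤ) * a j i)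
    (m : Fin ℓ → ℕ)
    (l : Fin ℓ → ℕ)
    (Rm : (i : Fin ℓ) → Polynomial (WField ℓ l))
    (i j : Fin ℓ) (n : ℤ) :
    zvar ℓ m l • (KopZ ℓ m l d a i ∘ Fnop ℓ m l d a Rm j n)
        - cst ℓ m l (qiz ℓ d i (-(a i j))) • (KopZ ℓ m l d a i ∘ Fnop ℓ m l d a Rm j (n + 1))
      = (cst ℓ m l (qiz ℓ d i (-(a i j))) * zvar ℓ m l) •
            (Fnop ℓ m l d a Rm j n ∘ KopZ ℓ m l d a i)
        - Fnop ℓ m l d a Rm j (n + 1) ∘ KopZ ℓ m l d a i := by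
  funext f
  simp only [Pi.sub_apply, Pi.smul_apply, smul_eq_mul, Function.comp_apply, KopZ_apply,
    Fnop_apply, map_mul, mul_sum, ← sum_sub_distrib]
  refine sum_congr rfl fun k _ => ?_
  rw [Fcoeff_add_one]
  linear_combination (Fprefactor ℓ m l d a j * Fcoeff ℓ m l d a Rm j n k * uik ℓ m l d j k f) *
    sub_mul_Kmul_eq_sub_mul_uik_Kmul ha ha' hsym i j k

/-- the quantum affine Cartan–lowering relation, mode-wise. -/
theorem qaffine_KF
    (ℓ : ℕ) (hℓ : 1 ≤ ℓ)
    (a : Fin ℓ → Fin ℓ → ℤ) (ha : ∀ i, a i i = 2) (ha' : ∀ i j, i ≠ j → a i j ≤ 0)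
    (d : Fin ℓ → ℕ) (hd : ∀ i, 0 < d i)
    (hsym : ∀ i j, (d i : ℤ) * a i j = (d j : ℤ) * a j i)
    (m : Fin ℓ → ℕ) (hm : ∀ i, 0 < m i)
    (l : Fin ℓ → ℕ) (hln : ∀ i, (l i : ℤ) = ∑ j, (m j : ℤ) * a j i)
    (Rp Rm : (i : Fin ℓ) → Polynomial (WField ℓ l))
    (hR : ∀ i, Rp i * Rm i =
      ∏ t : Fin (l i), (Polynomial.X * Polynomial.C (Wsmall ℓ l i t)⁻¹
        - Polynomial.C (Wsmall ℓ l i t)))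
    (i j : Fin ℓ) (n : ℤ) :
    zvar ℓ m l • (KopZ ℓ m l d a i ∘ Fnop ℓ m l d a Rm j n)
        - cst ℓ m l (qiz ℓ d i (-(a i j))) • (KopZ ℓ m l d a i ∘ Fnop ℓ m l d a Rm j (n + 1))
      = (cst ℓ m l (qiz ℓ d i (-(a i j))) * zvar ℓ m l) •
            (Fnop ℓ m l d a Rm j n ∘ KopZ ℓ m l d a i)
        - Fnop ℓ m l d a Rm j (n + 1) ∘ KopZ ℓ m l d a i :=
  qaffine_KF_general ℓ a ha ha' d hsym m l Rm i j n
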